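/- arXiv:2103.11546 — 2 statements merged into one kernel-verified Lean document; each statement's English description precedes it below -/
import Mathlib

section
/- Let F : Ω → ℝ and v : Ω × X → ℝ be such that all quantities below are integrable. Then E_π[F δ_σ(v)] = E_π[⟨DF, v⟩_{L²(X,σ)}] = E_π[∫_X D_xF(ω) v(x,ω) σ(dx)], and E_π[F δ_ω(v)] = E_π[⟨DF, v⟩_{L²(X,ω)}] = E_π[∫_X D_xF(ω) v(x,ω) ω(dx)]; i.e. δ_σ and δ_ω are the adjoints of the finite difference gradient D with respect to the scalar products given by σ and by ω respectively. -/
/-! Both identities come from the Mecke identity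
`E[∑_{x ∈ ω} u(x, ω)] = E[∫ u(x, ω + δ_x) σ(dx)]`. For `δ_σ` it is applied to
`u(x, ω) = F(ω) v(x, ω - δ_x)`, turning `E[∑_{x ∈ ω} F(ω) v(x, ω - δ_x)]` into
`E[∫ F(ω + δ_x) v(x, ω) σ(dx)]`; for `δ_ω` it is applied to `u(x, ω) = F(ω - δ_x) v(x, ω)`,
turning `E[∫ F(ω) v(x, ω + δ_x) σ(dx)]` into `E[∑_{x ∈ ω} F(ω - δ_x) v(x, ω)]`. In both cases what
is left is `D_x F(ω)` paired with `v`: a point `x ∈ ω` is removed by `D_x`, and since `σ` is diffuse,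
`σ`-almost every `x` lies outside the finite configuration `ω` and is added by `D_x`. -/

open MeasureTheory ENNReal

namespace ConfigSpace

variable {X : Type*} [DecidableEq X] [MeasurableSpace X] [MeasurableSpace (Finset X)]

/-- The point measure `ω = Σ_{x ∈ ω} δ_x` associated with a finite configuration
`ω`, viewed as a measure on `X`. -/
noncomputable def pt (ω : Finset X) : Measure X := ∑ x ∈ ω, Measure.dirac x

/-- The finite difference gradient
`D_x F(ω) = (F(ω) - F(ω+δ_x))·1_{x ∉ ω} + (F(ω) - F(ω-δ_x))·1_{x ∈ ω}`. -/
def D (F : Finset X → ℝ) (x : X) (ω : Finset X) : ℝ :=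
  if x ∈ ω then F ω - F (ω.erase x) else F ω - F (insert x ω)

/-- `D⁺_x F = max(0, D_x F)`. -/
def Dp (F : Finset X → ℝ) (x : X) (ω : Finset X) : ℝ := max (D F x ω) 0

/-- `D⁻_x F = -min(0, D_x F)`. -/
def Dm (F : Finset X → ℝ) (x : X) (ω : Finset X) : ℝ := -(min (D F x ω) 0)

/-- Indicator function `1_A` of a set of configurations. -/
noncomputable def ind (A : Set (Finset X)) : Finset X → ℝ := A.indicator fun _ => 1

/-- The configuration σ-algebra on `Finset X` makes the basic operations
(addition of a point, removal of a point, membership) measurable. -/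
def GoodAlgebra (X : Type*) [DecidableEq X] [MeasurableSpace X]
    [MeasurableSpace (Finset X)] : Prop :=
  Measurable (fun p : X × Finset X => insert p.1 p.2) ∧
  Measurable (fun p : X × Finset X => p.2.erase p.1) ∧
  MeasurableSet {p : X × Finset X | p.1 ∈ p.2}

/-- `π` is the Poisson measure with intensity `σ` on the configuration space `Ω`
of a.s. finite simple configurations of `X` (identified with `Finset X`):
it is a probability measure satisfying the Mecke identity, which characterizes
the Poisson measure with intensity `σ`. -/
def IsPoisson (σ : Measure X) (π : Measure (Finset X)) : Prop :=
  GoodAlgebra X ∧ IsProbabilityMeasure π ∧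
    ∀ u : X → Finset X → ℝ≥0∞, Measurable (Function.uncurry u) →
      ∫⁻ ω, ∑ x ∈ ω, u x ω ∂π = ∫⁻ ω, ∫⁻ x, u x (insert x ω) ∂σ ∂π


/-- `δ_σ(u)(ω) = ∫_X u(x,ω) σ(dx) − ∫_X u(x, ω−δ_x) ω(dx)`. -/
noncomputable def deltaSigma (σ : Measure X) (u : X → Finset X → ℝ) (ω : Finset X) : ℝ :=
  (∫ x, u x ω ∂σ) - ∑ x ∈ ω, u x (ω.erase x)

/-- `δ_ω(u)(ω) = ∫_X u(x,ω) ω(dx) − ∫_X u(x, ω+δ_x) σ(dx)`. -/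
noncomputable def deltaOmega (σ : Measure X) (u : X → Finset X → ℝ) (ω : Finset X) : ℝ :=
  (∑ x ∈ ω, u x ω) - ∫ x, u x (insert x ω) ∂σ

theorem ofReal_sum_add_sum_ofReal_neg {ι : Type*} (s : Finset ι) (a : ι → ℝ) :
    ENNReal.ofReal (∑ i ∈ s, a i) + ∑ i ∈ s, ENNReal.ofReal (-a i) =
      ENNReal.ofReal (-∑ i ∈ s, a i) + ∑ i ∈ s, ENNReal.ofReal (a i) := by
  have hfin (b : ι → ℝ) : ∑ i ∈ s, ENNReal.ofReal (b i) ≠ ∞ :=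
    ENNReal.sum_ne_top.2 fun _ _ => ENNReal.ofReal_ne_top
  rw [← ENNReal.toReal_eq_toReal_iff' (ENNReal.add_ne_top.2 ⟨ENNReal.ofReal_ne_top, hfin _⟩)
      (ENNReal.add_ne_top.2 ⟨ENNReal.ofReal_ne_top, hfin _⟩),
    ENNReal.toReal_add ENNReal.ofReal_ne_top (hfin _),
    ENNReal.toReal_add ENNReal.ofReal_ne_top (hfin _),
    ENNReal.toReal_sum fun _ _ => ENNReal.ofReal_ne_top,
    ENNReal.toReal_sum fun _ _ => ENNReal.ofReal_ne_top]
  simp only [ENNReal.toReal_ofReal']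
  have hsum := max_zero_sub_eq_self (∑ i ∈ s, a i)
  have hterms : ∑ i ∈ s, (max (a i) 0 - max (-a i) 0) = ∑ i ∈ s, a i :=
    Finset.sum_congr rfl fun i _ => max_zero_sub_eq_self (a i)
  rw [Finset.sum_sub_distrib] at hterms
  linarith

theorem integral_eq_of_lintegral_ofReal_add_eq {α β : Type*} [MeasurableSpace α]
    [MeasurableSpace β] {μ : Measure α} {ν : Measure β} {f : α → ℝ} {g : β → ℝ}
    (hf : Integrable f μ) (hg : Integrable g ν)
    (h : ∫⁻ a, ENNReal.ofReal (f a) ∂μ + ∫⁻ b, ENNReal.ofReal (-g b) ∂ν =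
      ∫⁻ a, ENNReal.ofReal (-f a) ∂μ + ∫⁻ b, ENNReal.ofReal (g b) ∂ν) :
    ∫ a, f a ∂μ = ∫ b, g b ∂ν := by
  have hf' : ∫⁻ a, ENNReal.ofReal (-f a) ∂μ ≠ ∞ := hf.neg.lintegral_lt_top.ne
  have hg' : ∫⁻ b, ENNReal.ofReal (-g b) ∂ν ≠ ∞ := hg.neg.lintegral_lt_top.ne
  have hreal := congrArg ENNReal.toReal h
  rw [ENNReal.toReal_add hf.lintegral_lt_top.ne hg',
    ENNReal.toReal_add hf' hg.lintegral_lt_top.ne] at hreal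
  rw [integral_eq_lintegral_pos_part_sub_lintegral_neg_part hf,
    integral_eq_lintegral_pos_part_sub_lintegral_neg_part hg]
  linarith

omit [DecidableEq X] [MeasurableSpace (Finset X)] in
theorem ae_notMem_finset (σ : Measure X) [NullSingletonClass σ] (ω : Finset X) :
    ∀ᵐ x ∂σ, x ∉ ω :=
  measure_eq_zero_iff_ae_notMem.mp (ω.countable_toSet.measure_zero σ)

theorem GoodAlgebra.ae_notMem_prod (hX : GoodAlgebra X) (π : Measure (Finset X))
    (σ : Measure X) [SFinite σ] [NullSingletonClass σ] :
    ∀ᵐ p ∂(π.prod σ), p.2 ∉ p.1 :=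
  (Measure.ae_prod_iff_ae_ae (measurable_swap hX.2.2).compl).mpr
    (ae_of_all _ (ae_notMem_finset σ))

section Mecke

variable {σ : Measure X} {π : Measure (Finset X)}

theorem IsPoisson.lintegral_sum_eq_lintegral_prod [SFinite σ] (hπ : IsPoisson σ π)
    {u : X → Finset X → ℝ≥0∞} (hu : Measurable (Function.uncurry u)) :
    ∫⁻ ω, ∑ x ∈ ω, u x ω ∂π = ∫⁻ p, u p.2 (insert p.2 p.1) ∂(π.prod σ) := by
  rw [hπ.2.2 u hu, lintegral_prod _ ?_]
  exact (hu.comp (measurable_snd.prodMk (hπ.1.1.comp measurable_swap))).aemeasurable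

theorem IsPoisson.integral_sum_eq_integral_prod [SFinite σ] (hπ : IsPoisson σ π)
    {u : X → Finset X → ℝ} (hu : Measurable (Function.uncurry u))
    (hsum : Integrable (fun ω => ∑ x ∈ ω, u x ω) π)
    (hprod : Integrable (fun p : Finset X × X => u p.2 (insert p.2 p.1)) (π.prod σ)) :
    ∫ ω, ∑ x ∈ ω, u x ω ∂π = ∫ p, u p.2 (insert p.2 p.1) ∂(π.prod σ) := by
  -- Only the sum over `ω` is integrable (`ω ↦ ∑ x ∈ ω, |u x ω|` need not even be measurable),
  -- so the Mecke identities for the positive and negative parts of `u` are combined pointwise.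
  refine integral_eq_of_lintegral_ofReal_add_eq hsum hprod ?_
  rw [← hπ.lintegral_sum_eq_lintegral_prod (u := fun x ω => ENNReal.ofReal (u x ω))
      (ENNReal.measurable_ofReal.comp hu),
    ← hπ.lintegral_sum_eq_lintegral_prod (u := fun x ω => ENNReal.ofReal (-u x ω))
      (ENNReal.measurable_ofReal.comp hu.neg),
    ← lintegral_add_left' (f := fun ω => ENNReal.ofReal (∑ x ∈ ω, u x ω))
      (ENNReal.measurable_ofReal.comp_aemeasurable hsum.aemeasurable),
    ← lintegral_add_left' (f := fun ω => ENNReal.ofReal (-∑ x ∈ ω, u x ω))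
      (ENNReal.measurable_ofReal.comp_aemeasurable hsum.aemeasurable.neg)]
  exact lintegral_congr fun ω => ofReal_sum_add_sum_ofReal_neg ω (u · ω)

theorem IsPoisson.integral_sum_erase_eq_integral_prod [SFinite σ] [NullSingletonClass σ]
    (hπ : IsPoisson σ π) {h : X → Finset X → Finset X → ℝ}
    (hh : Measurable (Function.uncurry fun x ω => h x ω (ω.erase x)))
    (hsum : Integrable (fun ω => ∑ x ∈ ω, h x ω (ω.erase x)) π)
    (hprod : Integrable (fun p : Finset X × X => h p.2 (insert p.2 p.1) p.1) (π.prod σ)) :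
    ∫ ω, ∑ x ∈ ω, h x ω (ω.erase x) ∂π = ∫ p, h p.2 (insert p.2 p.1) p.1 ∂(π.prod σ) := by
  have herase : (fun p : Finset X × X => h p.2 (insert p.2 p.1) ((insert p.2 p.1).erase p.2))
      =ᵐ[π.prod σ] fun p => h p.2 (insert p.2 p.1) p.1 :=
    (hπ.1.ae_notMem_prod π σ).mono fun p hp => by simp only [Finset.erase_insert hp]
  rw [hπ.integral_sum_eq_integral_prod hh hsum (hprod.congr herase.symm)]
  exact integral_congr_ae herase

end Mecke

omit [MeasurableSpace (Finset X)] in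
theorem mul_deltaSigma (σ : Measure X) (F : Finset X → ℝ) (v : X → Finset X → ℝ)
    (ω : Finset X) :
    F ω * deltaSigma σ v ω = ∫ x, F ω * v x ω ∂σ - ∑ x ∈ ω, F ω * v x (ω.erase x) := by
  rw [deltaSigma, mul_sub, Finset.mul_sum, integral_const_mul]

omit [MeasurableSpace (Finset X)] in
theorem mul_deltaOmega (σ : Measure X) (F : Finset X → ℝ) (v : X → Finset X → ℝ)
    (ω : Finset X) :
    F ω * deltaOmega σ v ω = ∑ x ∈ ω, F ω * v x ω - ∫ x, F ω * v x (insert x ω) ∂σ := by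
  rw [deltaOmega, mul_sub, Finset.mul_sum, integral_const_mul]

omit [MeasurableSpace (Finset X)] in
theorem integral_D_mul (σ : Measure X) [NullSingletonClass σ] (F : Finset X → ℝ)
    (v : X → Finset X → ℝ) (ω : Finset X) :
    ∫ x, D F x ω * v x ω ∂σ = ∫ x, (F ω - F (insert x ω)) * v x ω ∂σ :=
  integral_congr_ae ((ae_notMem_finset σ ω).mono fun x hx => by simp only [D, if_neg hx])

omit [MeasurableSpace X] [MeasurableSpace (Finset X)] in
theorem sum_D_mul (F : Finset X → ℝ) (v : X → Finset X → ℝ) (ω : Finset X) :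
    ∑ x ∈ ω, D F x ω * v x ω = ∑ x ∈ ω, (F ω - F (ω.erase x)) * v x ω :=
  Finset.sum_congr rfl fun x hx => by rw [D, if_pos hx]

section Adjointness

variable {σ : Measure X} [SFinite σ] [NullSingletonClass σ] {π : Measure (Finset X)}
  {F : Finset X → ℝ} {v : X → Finset X → ℝ}

theorem IsPoisson.integral_mul_deltaSigma (hπ : IsPoisson σ π) (hF : Measurable F)
    (hv : Measurable (Function.uncurry v))
    (hFv : Integrable (fun p : Finset X × X => F p.1 * v p.2 p.1) (π.prod σ))
    (hFinsv : Integrable (fun p : Finset X × X => F (insert p.2 p.1) * v p.2 p.1) (π.prod σ))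
    (hFverase : Integrable (fun ω => ∑ x ∈ ω, F ω * v x (ω.erase x)) π) :
    ∫ ω, F ω * deltaSigma σ v ω ∂π = ∫ ω, ∫ x, D F x ω * v x ω ∂σ ∂π := by
  have := hπ.2.1
  have hmecke : ∫ ω, ∑ x ∈ ω, F ω * v x (ω.erase x) ∂π
      = ∫ p, F (insert p.2 p.1) * v p.2 p.1 ∂(π.prod σ) :=
    hπ.integral_sum_erase_eq_integral_prod (h := fun x ω ω' => F ω * v x ω')
      ((hF.comp measurable_snd).mul (hv.comp (measurable_fst.prodMk hπ.1.2.1))) hFverase hFinsv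
  calc ∫ ω, F ω * deltaSigma σ v ω ∂π
      = ∫ ω, ∫ x, F ω * v x ω ∂σ ∂π - ∫ ω, ∑ x ∈ ω, F ω * v x (ω.erase x) ∂π := by
        simp_rw [mul_deltaSigma]
        exact integral_sub hFv.integral_prod_left hFverase
    _ = ∫ p, (F p.1 * v p.2 p.1 - F (insert p.2 p.1) * v p.2 p.1) ∂(π.prod σ) := by
        rw [hmecke, integral_sub hFv hFinsv, integral_prod _ hFv]
    _ = ∫ ω, ∫ x, D F x ω * v x ω ∂σ ∂π := by
        rw [integral_prod (fun p : Finset X × X => F p.1 * v p.2 p.1 - F (insert p.2 p.1) * v p.2 p.1)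
          (hFv.sub hFinsv)]
        simp_rw [integral_D_mul, sub_mul]

theorem IsPoisson.integral_mul_deltaOmega (hπ : IsPoisson σ π) (hF : Measurable F)
    (hv : Measurable (Function.uncurry v))
    (hFvins : Integrable (fun p : Finset X × X => F p.1 * v p.2 (insert p.2 p.1)) (π.prod σ))
    (hFv : Integrable (fun ω => ∑ x ∈ ω, F ω * v x ω) π)
    (hFerasev : Integrable (fun ω => ∑ x ∈ ω, F (ω.erase x) * v x ω) π) :
    ∫ ω, F ω * deltaOmega σ v ω ∂π = ∫ ω, ∑ x ∈ ω, D F x ω * v x ω ∂π := by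
  have := hπ.2.1
  have hmecke : ∫ ω, ∑ x ∈ ω, F (ω.erase x) * v x ω ∂π
      = ∫ p, F p.1 * v p.2 (insert p.2 p.1) ∂(π.prod σ) :=
    hπ.integral_sum_erase_eq_integral_prod (h := fun x ω ω' => F ω' * v x ω)
      ((hF.comp hπ.1.2.1).mul hv) hFerasev hFvins
  calc ∫ ω, F ω * deltaOmega σ v ω ∂π
      = ∫ ω, ∑ x ∈ ω, F ω * v x ω ∂π - ∫ ω, ∫ x, F ω * v x (insert x ω) ∂σ ∂π := by
        simp_rw [mul_deltaOmega]
        exact integral_sub hFv hFvins.integral_prod_left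
    _ = ∫ ω, ∑ x ∈ ω, F ω * v x ω ∂π - ∫ ω, ∑ x ∈ ω, F (ω.erase x) * v x ω ∂π := by
        rw [hmecke, integral_prod _ hFvins]
    _ = ∫ ω, ∑ x ∈ ω, D F x ω * v x ω ∂π := by
        simp_rw [← integral_sub hFv hFerasev, ← Finset.sum_sub_distrib, sum_D_mul, sub_mul]

end Adjointness

theorem adjointness_of_delta_general
    (σ : Measure X) [IsFiniteMeasure σ] [NullSingletonClass σ]
    (π : Measure (Finset X)) (hπ : IsPoisson σ π)
    (F : Finset X → ℝ) (v : X → Finset X → ℝ)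
    (hF : Measurable F) (hv : Measurable (Function.uncurry v))
    (h1 : Integrable (fun p : Finset X × X => F p.1 * v p.2 p.1) (π.prod σ))
    (h2 : Integrable (fun p : Finset X × X => F (insert p.2 p.1) * v p.2 p.1) (π.prod σ))
    (h3 : Integrable (fun p : Finset X × X => F p.1 * v p.2 (insert p.2 p.1)) (π.prod σ))
    (h4 : Integrable (fun ω => ∑ x ∈ ω, F ω * v x (ω.erase x)) π)
    (h6 : Integrable (fun ω => ∑ x ∈ ω, F ω * v x ω) π)
    (h7 : Integrable (fun ω => ∑ x ∈ ω, F (ω.erase x) * v x ω) π) :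
    (∫ ω, F ω * deltaSigma σ v ω ∂π = ∫ ω, ∫ x, D F x ω * v x ω ∂σ ∂π) ∧
    (∫ ω, F ω * deltaOmega σ v ω ∂π = ∫ ω, ∑ x ∈ ω, D F x ω * v x ω ∂π) :=
  ⟨hπ.integral_mul_deltaSigma hF hv h1 h2 h4, hπ.integral_mul_deltaOmega hF hv h3 h6 h7⟩

/-- Proposition 2.2: the operators `δ_σ` and `δ_ω` are the adjoints
of the finite difference gradient `D` under the Poisson measure `π`, with respect to
the scalar products of `L²(X,σ)` and `L²(X,ω)` respectively:
`E[F δ_σ(v)] = E[⟨DF, v⟩_{L²(σ)}]` and `E[F δ_ω(v)] = E[⟨DF, v⟩_{L²(ω)}]`,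
provided the corresponding quantities are integrable. -/
theorem adjointness_of_delta
    [MetricSpace X] [BorelSpace X]
    (σ : Measure X) [IsFiniteMeasure σ] [NullSingletonClass σ]
    (π : Measure (Finset X)) (hπ : IsPoisson σ π)
    (F : Finset X → ℝ) (v : X → Finset X → ℝ)
    (hF : Measurable F) (hv : Measurable (Function.uncurry v))
    (h1 : Integrable (fun p : Finset X × X => F p.1 * v p.2 p.1) (π.prod σ))
    (h2 : Integrable (fun p : Finset X × X => F (insert p.2 p.1) * v p.2 p.1) (π.prod σ))
    (h3 : Integrable (fun p : Finset X × X => F p.1 * v p.2 (insert p.2 p.1)) (π.prod σ))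
    (h4 : Integrable (fun ω => ∑ x ∈ ω, F ω * v x (ω.erase x)) π)
    (h5 : Integrable (fun ω => ∑ x ∈ ω, F (ω.erase x) * v x (ω.erase x)) π)
    (h6 : Integrable (fun ω => ∑ x ∈ ω, F ω * v x ω) π)
    (h7 : Integrable (fun ω => ∑ x ∈ ω, F (ω.erase x) * v x ω) π) :
    (∫ ω, F ω * deltaSigma σ v ω ∂π = ∫ ω, ∫ x, D F x ω * v x ω ∂σ ∂π) ∧
    (∫ ω, F ω * deltaOmega σ v ω ∂π = ∫ ω, ∑ x ∈ ω, D F x ω * v x ω ∂π) :=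
  adjointness_of_delta_general σ π hπ F v hF hv h1 h2 h3 h4 h6 h7

end ConfigSpace
end

section
/- (L¹ co-area formula) For every F : Ω → ℝ with integrable quantities, E_π[∫_X D⁺_xF(ω) σ(dx)] = ∫_{−∞}^{∞} E_π[∫_X D⁺_x1_{{F>t}}(ω) σ(dx)] dt, and the same identity holds with D⁻ in place of D⁺, and with the measure ω(dx) in place of σ(dx). Consequently E_π[|D F|_{L¹((σ+ω)/2)}] = ∫_{−∞}^{∞} E_π[|D 1_{{F>t}}|_{L¹((σ+ω)/2)}] dt. -/
/-!
For reals `a, b`, the positive part `(1_{t < a} - 1_{t < b})⁺` is the indicator of `[b, a)`, so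
integrating it in `t` gives `(a - b)⁺`. With `a = F ω` and `b = F (ω ± δ_x)` this is a pointwise
co-area formula for `D⁺_x F` and `D⁻_x F`, and Tonelli gives the two `σ(dx)` identities.

Since `σ` is diffuse, for `σ`-a.e. `x` the configuration `ω + δ_x` is `ω` with `x` toggled, so
the Mecke identity turns `E ∫ u(x, ω) ω(dx)` into `E ∫ u(x, ω ± δ_x) σ(dx)`. Toggling `x` negates
`D_x F`, hence exchanges `D⁺` and `D⁻`: the `ω(dx)` identity for `D⁺` is the `σ(dx)` identity
for `D⁻` and vice versa. Finally `|D| = D⁺ + D⁻` and `E ∫ |DF| dω = E ∫ |DF| dσ`, so the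
`(σ + ω)/2` identity is the sum of the two `σ(dx)` identities.
-/

open MeasureTheory ENNReal

namespace ConfigSpace

variable {X : Type*} [DecidableEq X] [MeasurableSpace X] [MeasurableSpace (Finset X)]

lemma ofReal_max_ite_lt_sub_ite_lt (a b t : ℝ) :
    ENNReal.ofReal (max ((if t < a then 1 else 0) - (if t < b then 1 else 0)) 0)
      = (Set.Ico b a).indicator 1 t := by
  by_cases ha : t < a <;> by_cases hb : t < b <;>
    simp [ha, hb, le_of_lt, not_le.mpr, not_lt.mp]

lemma lintegral_lintegral_lintegral_swap {α β γ : Type*} [MeasurableSpace α] [MeasurableSpace β]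
    [MeasurableSpace γ] {μ : Measure α} {ν : Measure β} {ρ : Measure γ} [SFinite μ] [SFinite ν]
    [SFinite ρ] {f : γ → α → β → ℝ≥0∞} (hf : Measurable fun q : γ × α × β => f q.1 q.2.1 q.2.2) :
    ∫⁻ a, ∫⁻ b, ∫⁻ t, f t a b ∂ρ ∂ν ∂μ = ∫⁻ t, ∫⁻ a, ∫⁻ b, f t a b ∂ν ∂μ ∂ρ := by
  have hinner : ∀ a, ∫⁻ b, ∫⁻ t, f t a b ∂ρ ∂ν = ∫⁻ t, ∫⁻ b, f t a b ∂ν ∂ρ := fun a =>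
    lintegral_lintegral_swap
      (hf.comp (f := fun p : β × γ => (p.2, a, p.1)) (by fun_prop)).aemeasurable
  simp_rw [hinner]
  refine lintegral_lintegral_swap (Measurable.aemeasurable ?_)
  exact Measurable.lintegral_prod_right' (f := fun q : (α × γ) × β => f q.1.2 q.1.1 q.2)
    (hf.comp (f := fun q : (α × γ) × β => (q.1.2, q.1.1, q.2)) (by fun_prop))

lemma measurable_lintegral_lintegral {α β γ : Type*} [MeasurableSpace α] [MeasurableSpace β]
    [MeasurableSpace γ] (μ : Measure α) (ν : Measure β) [SFinite μ] [SFinite ν]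
    {f : γ → α → β → ℝ≥0∞} (hf : Measurable fun q : γ × α × β => f q.1 q.2.1 q.2.2) :
    Measurable fun t => ∫⁻ a, ∫⁻ b, f t a b ∂ν ∂μ := by
  refine Measurable.lintegral_prod_right' (f := fun q : γ × α => ∫⁻ b, f q.1 q.2 b ∂ν) ?_
  exact Measurable.lintegral_prod_right' (f := fun q : (γ × α) × β => f q.1.1 q.1.2 q.2)
    (hf.comp (f := fun q : (γ × α) × β => (q.1.1, q.1.2, q.2)) (by fun_prop))

def toggle (x : X) (ω : Finset X) : Finset X :=
  if x ∈ ω then ω.erase x else insert x ω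

section

omit [MeasurableSpace X] [MeasurableSpace (Finset X)]

variable (F : Finset X → ℝ) (x : X) (ω : Finset X)

@[simp]
lemma toggle_toggle : toggle x (toggle x ω) = ω := by
  by_cases hx : x ∈ ω <;> simp [toggle, hx]

lemma toggle_of_notMem {x : X} {ω : Finset X} (hx : x ∉ ω) : toggle x ω = insert x ω :=
  if_neg hx

lemma D_eq_sub_toggle : D F x ω = F ω - F (toggle x ω) := by
  unfold D toggle; split_ifs <;> rfl

lemma D_toggle : D F x (toggle x ω) = -D F x ω := by
  simp only [D_eq_sub_toggle, toggle_toggle, neg_sub]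

lemma Dp_toggle : Dp F x (toggle x ω) = Dm F x ω := by
  rw [Dp, Dm, D_toggle, ← max_neg_neg, neg_zero]

lemma Dm_toggle : Dm F x (toggle x ω) = Dp F x ω := by
  rw [← Dp_toggle, toggle_toggle]

lemma ofReal_abs_D :
    ENNReal.ofReal |D F x ω| = ENNReal.ofReal (Dp F x ω) + ENNReal.ofReal (Dm F x ω) := by
  rcases le_total (D F x ω) 0 with h | h <;> simp [Dp, Dm, h, abs_of_nonpos, abs_of_nonneg]

lemma lintegral_Dp_ind_lt :
    ∫⁻ t, ENNReal.ofReal (Dp (ind {ω' | t < F ω'}) x ω) = ENNReal.ofReal (Dp F x ω) := by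
  simp only [Dp, D_eq_sub_toggle, ind, Set.indicator_apply, Set.mem_ofPred_eq]
  simp only [ofReal_max_ite_lt_sub_ite_lt]
  rw [lintegral_indicator_one measurableSet_Ico, Real.volume_Ico, ENNReal.ofReal_max,
    ENNReal.ofReal_zero, max_eq_left zero_le]

lemma lintegral_Dm_ind_lt :
    ∫⁻ t, ENNReal.ofReal (Dm (ind {ω' | t < F ω'}) x ω) = ENNReal.ofReal (Dm F x ω) := by
  simp only [← Dp_toggle, lintegral_Dp_ind_lt]

end

section Measurability

variable (hX : GoodAlgebra X)
include hX

lemma measurable_toggle : Measurable fun p : X × Finset X => toggle p.1 p.2 :=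
  Measurable.ite hX.2.2 hX.2.1 hX.1

lemma measurable_D {F : Finset X → ℝ} (hF : Measurable F) :
    Measurable fun p : X × Finset X => D F p.1 p.2 := by
  simp only [D_eq_sub_toggle]
  exact (hF.comp measurable_snd).sub (hF.comp (measurable_toggle hX))

lemma measurable_D_ind_lt {F : Finset X → ℝ} (hF : Measurable F) :
    Measurable fun q : ℝ × Finset X × X => D (ind {ω' | q.1 < F ω'}) q.2.2 q.2.1 := by
  have hlevel : Measurable fun q : ℝ × Finset X => ind {ω' | q.1 < F ω'} q.2 :=
    measurable_const.indicator (measurableSet_lt measurable_fst (hF.comp measurable_snd))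
  simp only [D_eq_sub_toggle]
  exact (hlevel.comp (f := fun q : ℝ × Finset X × X => (q.1, q.2.1)) (by fun_prop)).sub
    (hlevel.comp (measurable_fst.prodMk ((measurable_toggle hX).comp
      (f := fun q : ℝ × Finset X × X => (q.2.2, q.2.1)) (by fun_prop))))

lemma measurable_ofReal_Dp_ind_lt {F : Finset X → ℝ} (hF : Measurable F) :
    Measurable fun q : ℝ × Finset X × X =>
      ENNReal.ofReal (Dp (ind {ω' | q.1 < F ω'}) q.2.2 q.2.1) :=
  ((measurable_D_ind_lt hX hF).max measurable_const).ennreal_ofReal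

end Measurability

omit [DecidableEq X] [MeasurableSpace (Finset X)] in
lemma lintegral_pt {f : X → ℝ≥0∞} (hf : Measurable f) (ω : Finset X) :
    ∫⁻ x, f x ∂pt ω = ∑ x ∈ ω, f x := by
  rw [pt, lintegral_finsetSum_measure]
  exact Finset.sum_congr rfl fun x _ => lintegral_dirac' x hf

lemma lintegral_Dp_coarea (hX : GoodAlgebra X) (σ : Measure X) [SFinite σ]
    (π : Measure (Finset X)) [SFinite π] {F : Finset X → ℝ} (hF : Measurable F) :
    ∫⁻ ω, ∫⁻ x, ENNReal.ofReal (Dp F x ω) ∂σ ∂π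
      = ∫⁻ t : ℝ, ∫⁻ ω, ∫⁻ x, ENNReal.ofReal (Dp (ind {ω' | t < F ω'}) x ω) ∂σ ∂π := by
  simp_rw [← lintegral_Dp_ind_lt F]
  exact lintegral_lintegral_lintegral_swap (measurable_ofReal_Dp_ind_lt hX hF)

lemma lintegral_Dm_coarea (hX : GoodAlgebra X) (σ : Measure X) [SFinite σ]
    (π : Measure (Finset X)) [SFinite π] {F : Finset X → ℝ} (hF : Measurable F) :
    ∫⁻ ω, ∫⁻ x, ENNReal.ofReal (Dm F x ω) ∂σ ∂π
      = ∫⁻ t : ℝ, ∫⁻ ω, ∫⁻ x, ENNReal.ofReal (Dm (ind {ω' | t < F ω'}) x ω) ∂σ ∂π := by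
  simp_rw [← lintegral_Dm_ind_lt F]
  exact lintegral_lintegral_lintegral_swap
    (((measurable_D_ind_lt hX hF).min measurable_const).neg.ennreal_ofReal)

namespace IsPoisson

variable {σ : Measure X} {π : Measure (Finset X)} (hπ : IsPoisson σ π)
include hπ

lemma lintegral_sum_eq_lintegral_toggle [NullSingletonClass σ] {u : X → Finset X → ℝ≥0∞}
    (hu : Measurable (Function.uncurry u)) :
    ∫⁻ ω, ∑ x ∈ ω, u x ω ∂π = ∫⁻ ω, ∫⁻ x, u x (toggle x ω) ∂σ ∂π := by
  rw [hπ.2.2 u hu]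
  refine lintegral_congr fun ω => lintegral_congr_ae ?_
  filter_upwards [measure_eq_zero_iff_ae_notMem.1 (ω.countable_toSet.measure_zero σ)] with x hx
  rw [toggle_of_notMem hx]

variable [NullSingletonClass σ] {G : Finset X → ℝ} (hG : Measurable G)
include hG

lemma lintegral_sum_Dp :
    ∫⁻ ω, ∑ x ∈ ω, ENNReal.ofReal (Dp G x ω) ∂π
      = ∫⁻ ω, ∫⁻ x, ENNReal.ofReal (Dm G x ω) ∂σ ∂π := by
  simp_rw [hπ.lintegral_sum_eq_lintegral_toggle (u := fun x ω => ENNReal.ofReal (Dp G x ω))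
    ((measurable_D hπ.1 hG).max measurable_const).ennreal_ofReal, Dp_toggle]

lemma lintegral_sum_Dm :
    ∫⁻ ω, ∑ x ∈ ω, ENNReal.ofReal (Dm G x ω) ∂π
      = ∫⁻ ω, ∫⁻ x, ENNReal.ofReal (Dp G x ω) ∂σ ∂π := by
  simp_rw [hπ.lintegral_sum_eq_lintegral_toggle (u := fun x ω => ENNReal.ofReal (Dm G x ω))
    ((measurable_D hπ.1 hG).min measurable_const).neg.ennreal_ofReal, Dm_toggle]

lemma lintegral_sum_abs_D :
    ∫⁻ ω, ∑ x ∈ ω, ENNReal.ofReal |D G x ω| ∂π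
      = ∫⁻ ω, ∫⁻ x, ENNReal.ofReal |D G x ω| ∂σ ∂π := by
  simp_rw [hπ.lintegral_sum_eq_lintegral_toggle (u := fun x ω => ENNReal.ofReal |D G x ω|)
    (measurable_D hπ.1 hG).abs.ennreal_ofReal, D_toggle, abs_neg]

lemma lintegral_half_add_pt_abs_D [SFinite σ] :
    ∫⁻ ω, ∫⁻ x, ENNReal.ofReal |D G x ω| ∂((2 : ℝ≥0∞)⁻¹ • (σ + pt ω)) ∂π
      = ∫⁻ ω, ∫⁻ x, ENNReal.ofReal (Dp G x ω) ∂σ ∂π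
        + ∫⁻ ω, ∫⁻ x, ENNReal.ofReal (Dm G x ω) ∂σ ∂π := by
  have hD := measurable_D hπ.1 hG
  have hDp : Measurable fun p : X × Finset X => ENNReal.ofReal (Dp G p.1 p.2) :=
    (hD.max measurable_const).ennreal_ofReal
  have habs : Measurable fun p : X × Finset X => ENNReal.ofReal |D G p.1 p.2| :=
    hD.abs.ennreal_ofReal
  calc _ = ∫⁻ ω, (2 : ℝ≥0∞)⁻¹ * (∫⁻ x, ENNReal.ofReal |D G x ω| ∂σ
          + ∑ x ∈ ω, ENNReal.ofReal |D G x ω|) ∂π := by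
        have hx : ∀ ω, Measurable fun x => ENNReal.ofReal |D G x ω| := fun ω =>
          habs.comp measurable_prodMk_right
        simp only [lintegral_smul_measure, lintegral_add_measure, lintegral_pt, hx, smul_eq_mul]
    _ = (2 : ℝ≥0∞)⁻¹ * (∫⁻ ω, ∫⁻ x, ENNReal.ofReal |D G x ω| ∂σ ∂π
          + ∫⁻ ω, ∫⁻ x, ENNReal.ofReal |D G x ω| ∂σ ∂π) := by
        rw [lintegral_const_mul' _ _ (by simp), lintegral_add_left habs.lintegral_prod_left',
          hπ.lintegral_sum_abs_D hG]
    _ = ∫⁻ ω, ∫⁻ x, ENNReal.ofReal |D G x ω| ∂σ ∂π := by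
        rw [← two_mul, ← mul_assoc, ENNReal.inv_mul_cancel two_ne_zero ofNat_ne_top, one_mul]
    _ = _ := by
        simp_rw [ofReal_abs_D]
        rw [← lintegral_add_left hDp.lintegral_prod_left']
        exact lintegral_congr fun ω => lintegral_add_left (hDp.comp measurable_prodMk_right) _

end IsPoisson

theorem coarea_L1_general
    (σ : Measure X) [IsFiniteMeasure σ] [NullSingletonClass σ]
    (π : Measure (Finset X)) (hπ : IsPoisson σ π)
    (F : Finset X → ℝ) (hF : Measurable F) :
    (∫⁻ ω, ∫⁻ x, ENNReal.ofReal (Dp F x ω) ∂σ ∂π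
      = ∫⁻ t : ℝ, ∫⁻ ω, ∫⁻ x, ENNReal.ofReal (Dp (ind {ω' | t < F ω'}) x ω) ∂σ ∂π) ∧
    (∫⁻ ω, ∫⁻ x, ENNReal.ofReal (Dm F x ω) ∂σ ∂π
      = ∫⁻ t : ℝ, ∫⁻ ω, ∫⁻ x, ENNReal.ofReal (Dm (ind {ω' | t < F ω'}) x ω) ∂σ ∂π) ∧
    (∫⁻ ω, ∑ x ∈ ω, ENNReal.ofReal (Dp F x ω) ∂π
      = ∫⁻ t : ℝ, ∫⁻ ω, ∑ x ∈ ω, ENNReal.ofReal (Dp (ind {ω' | t < F ω'}) x ω) ∂π) ∧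
    (∫⁻ ω, ∑ x ∈ ω, ENNReal.ofReal (Dm F x ω) ∂π
      = ∫⁻ t : ℝ, ∫⁻ ω, ∑ x ∈ ω, ENNReal.ofReal (Dm (ind {ω' | t < F ω'}) x ω) ∂π) ∧
    (∫⁻ ω, ∫⁻ x, ENNReal.ofReal |D F x ω| ∂((2 : ℝ≥0∞)⁻¹ • (σ + pt ω)) ∂π
      = ∫⁻ t : ℝ, ∫⁻ ω, ∫⁻ x, ENNReal.ofReal |D (ind {ω' | t < F ω'}) x ω|
          ∂((2 : ℝ≥0∞)⁻¹ • (σ + pt ω)) ∂π) := by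
  have : IsProbabilityMeasure π := hπ.2.1
  have hlevel : ∀ t : ℝ, Measurable (ind {ω' | t < F ω'}) := fun t =>
    measurable_const.indicator (hF measurableSet_Ioi)
  have hp := lintegral_Dp_coarea hπ.1 σ π hF
  have hm := lintegral_Dm_coarea hπ.1 σ π hF
  refine ⟨hp, hm, ?_, ?_, ?_⟩
  · simpa only [hπ.lintegral_sum_Dp, hF, hlevel] using hm
  · simpa only [hπ.lintegral_sum_Dm, hF, hlevel] using hp
  · simp only [hπ.lintegral_half_add_pt_abs_D, hF, hlevel]
    rw [hp, hm]
    exact (lintegral_add_left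
      (measurable_lintegral_lintegral π σ (measurable_ofReal_Dp_ind_lt hπ.1 hF)
        (f := fun t ω x => ENNReal.ofReal (Dp (ind {ω' | t < F ω'}) x ω))) _).symm

/-- Lemma 4.2, `L¹` co-area formula:
`E[|D±F|_{L¹(σ)}] = ∫_ℝ E[|D± 1_{F>t}|_{L¹(σ)}] dt`, the same identity holds with
the measure `ω(dx)` in place of `σ(dx)`, and consequently
`E[|DF|_{L¹((σ+ω)/2)}] = ∫_ℝ E[|D 1_{F>t}|_{L¹((σ+ω)/2)}] dt`. -/
theorem coarea_L1
    [MetricSpace X] [BorelSpace X]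
    (σ : Measure X) [IsFiniteMeasure σ] [NullSingletonClass σ]
    (π : Measure (Finset X)) (hπ : IsPoisson σ π)
    (F : Finset X → ℝ) (hF : Measurable F) :
    (∫⁻ ω, ∫⁻ x, ENNReal.ofReal (Dp F x ω) ∂σ ∂π
      = ∫⁻ t : ℝ, ∫⁻ ω, ∫⁻ x, ENNReal.ofReal (Dp (ind {ω' | t < F ω'}) x ω) ∂σ ∂π) ∧
    (∫⁻ ω, ∫⁻ x, ENNReal.ofReal (Dm F x ω) ∂σ ∂π
      = ∫⁻ t : ℝ, ∫⁻ ω, ∫⁻ x, ENNReal.ofReal (Dm (ind {ω' | t < F ω'}) x ω) ∂σ ∂π) ∧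
    (∫⁻ ω, ∑ x ∈ ω, ENNReal.ofReal (Dp F x ω) ∂π
      = ∫⁻ t : ℝ, ∫⁻ ω, ∑ x ∈ ω, ENNReal.ofReal (Dp (ind {ω' | t < F ω'}) x ω) ∂π) ∧
    (∫⁻ ω, ∑ x ∈ ω, ENNReal.ofReal (Dm F x ω) ∂π
      = ∫⁻ t : ℝ, ∫⁻ ω, ∑ x ∈ ω, ENNReal.ofReal (Dm (ind {ω' | t < F ω'}) x ω) ∂π) ∧
    (∫⁻ ω, ∫⁻ x, ENNReal.ofReal |D F x ω| ∂((2 : ℝ≥0∞)⁻¹ • (σ + pt ω)) ∂π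
      = ∫⁻ t : ℝ, ∫⁻ ω, ∫⁻ x, ENNReal.ofReal |D (ind {ω' | t < F ω'}) x ω|
          ∂((2 : ℝ≥0∞)⁻¹ • (σ + pt ω)) ∂π) :=
  coarea_L1_general σ π hπ F hF

end ConfigSpace
end
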